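/- Define f̂(s) = s·e^{-1/s²} for s ≠ 0, f̂(0) = 0, and let F̂(s) = ∫₀^s f̂(t) dt. Fix R > 0 and let κ satisfy 2 < κ < 2 + 2/R². Then for all s with |s| ≤ R, one has s·f̂(s) − κ·F̂(s) ≥ 0. -/

import Mathlib

/-!
With `f s = s * exp (-(1 / s ^ 2))` and `F' = f`, the function `g s = s * f s - κ * F s` vanishes
at `0` and, away from `0`, has derivative `(2 + 2 / s ^ 2 - κ) * f s`. For `|s| ≤ R` the first
factor is nonnegative because `κ < 2 + 2 / R ^ 2`, so `g'` has the sign of `s`: `g` decreases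
towards `0` on `[-R, 0]` and increases from `0` on `[0, R]`.
-/

open Real Set

/-- `s * exp (-(1 / s ^ 2))` hides a jump of the exponential factor at `0` (where Lean reads
`1 / 0 ^ 2` as `0`); `expNegInvGlue` is the continuous version of that factor. -/
theorem mul_exp_neg_inv_sq_eq_mul_expNegInvGlue (s : ℝ) :
    s * exp (-(1 / s ^ 2)) = s * expNegInvGlue (s ^ 2) := by
  rcases eq_or_ne s 0 with rfl | hs
  · simp
  · rw [expNegInvGlue, if_neg (not_le.mpr (by positivity)), one_div]

theorem continuous_mul_exp_neg_inv_sq : Continuous fun s : ℝ => s * exp (-(1 / s ^ 2)) := by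
  simp only [mul_exp_neg_inv_sq_eq_mul_expNegInvGlue]
  exact continuous_id.mul ((expNegInvGlue.contDiff (n := 0)).continuous.comp (continuous_pow 2))

theorem hasDerivAt_sq_mul_exp_neg_inv_sq {x : ℝ} (hx : x ≠ 0) :
    HasDerivAt (fun s : ℝ => s ^ 2 * exp (-(1 / s ^ 2)))
      ((2 + 2 / x ^ 2) * (x * exp (-(1 / x ^ 2)))) x := by
  have hinner : HasDerivAt (fun s : ℝ => -(1 / s ^ 2)) (2 / x ^ 3) x := by
    have h := ((hasDerivAt_pow 2 x).inv (pow_ne_zero 2 hx)).neg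
    refine (h.congr_deriv ?_).congr_of_eventuallyEq (.of_forall fun s => by simp)
    field_simp; norm_num; ring
  refine ((hasDerivAt_pow 2 x).mul ((hasDerivAt_exp _).comp x hinner)).congr_deriv ?_
  field_simp
  norm_num
  ring

theorem nonneg_of_hasDerivAt_of_mul_deriv_nonneg {g g' : ℝ → ℝ} (hg : Continuous g)
    (hg0 : g 0 = 0) (s : ℝ) (hderiv : ∀ x, x ≠ 0 → |x| ≤ |s| → HasDerivAt g (g' x) x)
    (hsign : ∀ x, x ≠ 0 → |x| ≤ |s| → 0 ≤ x * g' x) : 0 ≤ g s := by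
  rcases lt_trichotomy s 0 with hs | rfl | hs
  · have hmem : ∀ x ∈ interior (Icc s 0), x < 0 ∧ |x| ≤ |s| := fun x hx => by
      rw [interior_Icc] at hx
      exact ⟨hx.2, abs_le_abs_of_nonpos hx.2.le hx.1.le⟩
    have hanti : AntitoneOn g (Icc s 0) :=
      antitoneOn_of_hasDerivWithinAt_nonpos (convex_Icc s 0) hg.continuousOn
        (fun x hx => (hderiv x (hmem x hx).1.ne (hmem x hx).2).hasDerivWithinAt)
        (fun x hx => nonpos_of_mul_nonneg_right (hsign x (hmem x hx).1.ne (hmem x hx).2)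
          (hmem x hx).1)
    simpa [hg0] using hanti ⟨le_rfl, hs.le⟩ ⟨hs.le, le_rfl⟩ hs.le
  · exact hg0.ge
  · have hmem : ∀ x ∈ interior (Icc 0 s), 0 < x ∧ |x| ≤ |s| := fun x hx => by
      rw [interior_Icc] at hx
      exact ⟨hx.1, abs_le_abs_of_nonneg hx.1.le hx.2.le⟩
    have hmono : MonotoneOn g (Icc 0 s) :=
      monotoneOn_of_hasDerivWithinAt_nonneg (convex_Icc 0 s) hg.continuousOn
        (fun x hx => (hderiv x (hmem x hx).1.ne' (hmem x hx).2).hasDerivWithinAt)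
        (fun x hx => nonneg_of_mul_nonneg_right (hsign x (hmem x hx).1.ne' (hmem x hx).2)
          (hmem x hx).1)
    simpa [hg0] using hmono ⟨le_rfl, hs.le⟩ ⟨hs.le, le_rfl⟩ hs.le

theorem sub_nonneg_of_abs_le_of_lt_add_div_sq {x R κ : ℝ} (hx : x ≠ 0) (hxR : |x| ≤ R)
    (hκ : κ < 2 + 2 / R ^ 2) : 0 ≤ 2 + 2 / x ^ 2 - κ := by
  have hsq : x ^ 2 ≤ R ^ 2 := sq_le_sq' (abs_le.mp hxR).1 (abs_le.mp hxR).2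
  have : 2 / R ^ 2 ≤ 2 / x ^ 2 := div_le_div_of_nonneg_left zero_le_two (by positivity) hsq
  linarith

theorem mul_mul_exp_neg_inv_sq_sub_mul_integral_nonneg {R κ s : ℝ} (hκ : κ < 2 + 2 / R ^ 2)
    (hsR : |s| ≤ R) :
    0 ≤ s * (s * exp (-(1 / s ^ 2))) - κ * ∫ t in (0:ℝ)..s, t * exp (-(1 / t ^ 2)) := by
  have hF (x : ℝ) : HasDerivAt (fun u => ∫ t in (0:ℝ)..u, t * exp (-(1 / t ^ 2)))
      (x * exp (-(1 / x ^ 2))) x :=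
    (continuous_mul_exp_neg_inv_sq.integral_hasStrictDerivAt 0 x).hasDerivAt
  refine nonneg_of_hasDerivAt_of_mul_deriv_nonneg
    (g := fun u => u * (u * exp (-(1 / u ^ 2))) - κ * ∫ t in (0:ℝ)..u, t * exp (-(1 / t ^ 2)))
    (g' := fun x => (2 + 2 / x ^ 2 - κ) * (x * exp (-(1 / x ^ 2))))
    ?_ ?_ s (fun x hx _ => ?_) (fun x hx hxs => ?_)
  · exact (continuous_id.mul continuous_mul_exp_neg_inv_sq).sub (continuous_const.mul
      (continuous_iff_continuousAt.mpr fun x => (hF x).continuousAt))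
  · simp
  · refine (((hasDerivAt_sq_mul_exp_neg_inv_sq hx).sub ((hF x).const_mul κ)).congr_deriv
      (by ring)).congr_of_eventuallyEq (.of_forall fun u => ?_)
    simp only [Pi.sub_apply]
    ring
  · calc (0 : ℝ) ≤ (2 + 2 / x ^ 2 - κ) * (x ^ 2 * exp (-(1 / x ^ 2))) :=
        mul_nonneg (sub_nonneg_of_abs_le_of_lt_add_div_sq hx (hxs.trans hsR) hκ) (by positivity)
      _ = x * ((2 + 2 / x ^ 2 - κ) * (x * exp (-(1 / x ^ 2)))) := by ring

theorem stmt_4_general (f F : ℝ → ℝ)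
    (hf : ∀ s : ℝ, s ≠ 0 → f s = s * Real.exp (-(1 / s ^ 2)))
    (hf0 : f 0 = 0)
    (hF : ∀ s : ℝ, F s = ∫ t in (0:ℝ)..s, f t)
    (R κ : ℝ) (hκ₂ : κ < 2 + 2 / R ^ 2) :
    ∀ s : ℝ, |s| ≤ R → 0 ≤ s * f s - κ * F s := by
  have hf_eq : f = fun s => s * exp (-(1 / s ^ 2)) := by
    funext s
    rcases eq_or_ne s 0 with rfl | hs
    · simp [hf0]
    · exact hf s hs
  intro s hsR
  rw [hF, hf_eq]
  exact mul_mul_exp_neg_inv_sq_sub_mul_integral_nonneg hκ₂ hsR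

theorem stmt_4 (f F : ℝ → ℝ)
    (hf : ∀ s : ℝ, s ≠ 0 → f s = s * Real.exp (-(1 / s ^ 2)))
    (hf0 : f 0 = 0)
    (hF : ∀ s : ℝ, F s = ∫ t in (0:ℝ)..s, f t)
    (R κ : ℝ) (hR : 0 < R) (hκ₁ : 2 < κ) (hκ₂ : κ < 2 + 2 / R ^ 2) :
    ∀ s : ℝ, |s| ≤ R → 0 ≤ s * f s - κ * F s :=
  stmt_4_general f F hf hf0 hF R κ hκ₂
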